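/- arXiv:2602.09592 — 4 statements merged into one kernel-verified Lean document; each statement's English description precedes it below -/
import Mathlib

section
/- If μ and θ are infinite cardinals with μ = μ^θ, then Sep₁(μ, μ, 2^μ, θ, θ) holds. -/
/-!
Embed `^μ(2^μ)` into `^μ2` and use `μ = μ^θ` to enumerate the indices `ε < μ` by codes
`c : θ → (θ → μ) × (θ → 2)`: each `c i` is a pattern prescribing `θ` values, and `f_c(ν)` is the
unique `i` whose pattern `ν` matches. If `θ` distinct `ν_i` all avoided `ϱ`, let `c i` record the
values of `ν_i` at points separating it from every other `ν_j`; then `ν_i` matches only `c i`, so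
`f_c(ν_i) = i`, which fails for `i = ϱ(c)`.
-/

open Cardinal Set

namespace BB

noncomputable abbrev oLift (o : Ordinal.{0}) : Ordinal.{1} := Ordinal.lift.{1, 0} o
noncomputable abbrev cLift (c : Cardinal.{0}) : Cardinal.{1} := Cardinal.lift.{1, 0} c

/-- `^μ∂`: the set of functions from `μ` to `∂`, coded as functions on the
ordinals vanishing on `[μ, ∞)`. -/
def Fn (a b : Ordinal) : Set (Ordinal → Ordinal) :=
  {ν | (∀ α < a, ν α < b) ∧ ∀ α, a ≤ α → ν α = 0}

/-- `Sep₁(χ, μ, ∂, θ, Υ)`. -/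
def Sep1 (χ μ par θ Ups : Cardinal) : Prop :=
  ∃ f : Ordinal → (Ordinal → Ordinal) → Ordinal,
    (∀ ε < χ.ord, ∀ ν ∈ Fn μ.ord par.ord, f ε ν < θ.ord) ∧
    ∀ ϱ : Ordinal → Ordinal, (∀ ε < χ.ord, ϱ ε < θ.ord) →
      Cardinal.mk {ν | ν ∈ Fn μ.ord par.ord ∧ ∀ ε < χ.ord, f ε ν ≠ ϱ ε} < cLift Ups

universe u

def Separates {I X T : Type u} (F : I → X → T) : Prop :=
  ∀ ϱ : I → T, #{x | ∀ i, F i x ≠ ϱ i} < #T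

theorem Separates.comp_right {I X Y T : Type u} {F : I → X → T} (hF : Separates F)
    {g : Y → X} (hg : Function.Injective g) : Separates fun i y => F i (g y) := by
  intro ϱ
  refine lt_of_le_of_lt ?_ (hF ϱ)
  exact mk_le_of_injective (f := fun y => ⟨g y.1, y.2⟩)
    fun y y' hyy' => Subtype.ext (hg (congrArg Subtype.val hyy'))

section Decoding

variable {M T : Type u}

def Matches (p : (T → M) × (T → Bool)) (ν : M → Bool) : Prop :=
  ∀ k, ν (p.1 k) = p.2 k

open Classical in
noncomputable def decode [Nonempty T] (e : (T → (T → M) × (T → Bool)) ≃ M)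
    (m : M) (ν : M → Bool) : T :=
  if h : ∃! i, Matches (e.symm m i) ν then h.exists.choose else Classical.arbitrary T

theorem decode_apply_eq [Nonempty T] (e : (T → (T → M) × (T → Bool)) ≃ M)
    {c : T → (T → M) × (T → Bool)} {ν : M → Bool} {i : T}
    (hc : ∀ j, Matches (c j) ν ↔ j = i) : decode e (e c) ν = i := by
  have hu : ∃! j, Matches (e.symm (e c) j) ν := by
    simpa only [Equiv.symm_apply_apply, hc] using existsUnique_eq (a' := i)
  rw [decode, dif_pos hu]
  exact (hc _).1 (by simpa only [Equiv.symm_apply_apply] using hu.exists.choose_spec)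

theorem exists_patterns_matching_iff [Nonempty M] {g : T → M → Bool}
    (hg : Function.Injective g) :
    ∃ c : T → (T → M) × (T → Bool), ∀ i j, Matches (c j) (g i) ↔ j = i := by
  classical
  have hsep : ∀ j k, j ≠ k → ∃ m, g j m ≠ g k m := fun j k hjk =>
    Function.ne_iff.mp (hg.ne hjk)
  choose d hd using hsep
  let D : T → T → M := fun j k => if h : j = k then Classical.arbitrary M else d j k h
  refine ⟨fun j => (D j, fun k => g j (D j k)), fun i j => ⟨fun hm => ?_, ?_⟩⟩
  · by_contra hji
    have := hm i
    simp only [D, dif_neg hji] at this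
    exact hd j i hji this.symm
  · rintro rfl k
    rfl

theorem separates_decode [Nonempty M] [Nonempty T] (e : (T → (T → M) × (T → Bool)) ≃ M) :
    Separates (decode e) := by
  intro ϱ
  by_contra! hle
  obtain ⟨g⟩ := (le_def _ _).mp hle
  obtain ⟨c, hc⟩ := exists_patterns_matching_iff (Subtype.val_injective.comp g.injective)
  exact (g (ϱ (e c))).2 (e c) (decode_apply_eq e (hc _))

end Decoding

theorem mk_patterns_eq {M T : Type u} (hM : ℵ₀ ≤ #M) (h : #M ^ #T = #M) :
    #(T → (T → M) × (T → Bool)) = #M := by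
  have hpat : #((T → M) × (T → Bool)) = #M := by
    rw [mk_prod, lift_id, lift_id, ← power_def, mk_arrow, mk_bool, lift_ofNat, lift_uzero, h]
    refine mul_eq_left hM ?_ (power_ne_zero _ two_ne_zero)
    calc (2 : Cardinal) ^ #T ≤ #M ^ #T :=
          power_le_power_right ((ofNat_le_aleph0 (n := 2)).trans hM)
      _ = #M := h
  rw [← power_def, hpat, h]

theorem mk_Fn_le (a b : Ordinal.{u}) : #(Fn a b) ≤ #(Iio a → Iio b) := by
  refine mk_le_of_injective (f := fun ν α => ⟨ν.1 α, ν.2.1 α α.2⟩) fun ν ν' hνν' => ?_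
  ext α
  rcases lt_or_ge α a with hα | hα
  · exact congrArg Subtype.val (congrFun hνν' ⟨α, hα⟩)
  · rw [ν.2.2 α hα, ν'.2.2 α hα]

theorem mk_Fn_ord_two_power_le {μ : Cardinal.{u}} (hμ : ℵ₀ ≤ μ) :
    #(Fn μ.ord ((2 : Cardinal) ^ μ).ord) ≤ #(Iio μ.ord → Bool) := by
  refine (mk_Fn_le _ _).trans (le_of_eq ?_)
  rw [← power_def, mk_arrow, mk_Iio_ordinal, mk_Iio_ordinal, card_ord, card_ord, mk_bool,
    lift_ofNat, lift_uzero, lift_two_power, ← power_mul, mul_eq_self (aleph0_le_lift.mpr hμ)]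

theorem nonempty_Iio_ord {c : Cardinal.{u}} (hc : c ≠ 0) : Nonempty (Iio c.ord) := by
  rw [← mk_ne_zero_iff, mk_Iio_ordinal, card_ord]
  simpa using hc

theorem sep1_of_separates {χ μ par θ : Cardinal.{0}}
    {F : Iio χ.ord → Fn μ.ord par.ord → Iio θ.ord} (hF : Separates F) :
    Sep1 χ μ par θ θ := by
  classical
  let f : Ordinal → (Ordinal → Ordinal) → Ordinal := fun ε ν =>
    if h : ε < χ.ord ∧ ν ∈ Fn μ.ord par.ord then F ⟨ε, h.1⟩ ⟨ν, h.2⟩ else 0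
  have hf : ∀ ε (hε : ε < χ.ord) ν (hν : ν ∈ Fn μ.ord par.ord), f ε ν = F ⟨ε, hε⟩ ⟨ν, hν⟩ :=
    fun ε hε ν hν => dif_pos ⟨hε, hν⟩
  refine ⟨f, fun ε hε ν hν => hf ε hε ν hν ▸ (F _ _).2, fun ϱ hϱ => ?_⟩
  have hbad := hF fun ε => ⟨ϱ ε, hϱ ε ε.2⟩
  rw [mk_Iio_ordinal, card_ord] at hbad
  have hgood : ∀ ν (hν : ν ∈ Fn μ.ord par.ord ∧ ∀ ε < χ.ord, f ε ν ≠ ϱ ε) ε,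
      F ε ⟨ν, hν.1⟩ ≠ ⟨ϱ ε, hϱ ε ε.2⟩ := fun ν hν ε hε =>
    hν.2 ε ε.2 (by rw [hf ε ε.2 ν hν.1]; exact congrArg Subtype.val hε)
  refine lt_of_le_of_lt ?_ hbad
  exact mk_le_of_injective (f := fun ν => ⟨⟨ν.1, ν.2.1⟩, hgood ν.1 ν.2⟩)
    fun ν ν' hνν' => Subtype.ext (congrArg (fun x => x.1.1) hνν')

theorem stmt6_general (μ θ : Cardinal) (hμ : ℵ₀ ≤ μ) (h : μ = μ ^ θ) :
    Sep1 μ μ ((2 : Cardinal) ^ μ) θ θ := by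
  have hθ : θ ≠ 0 := by
    rintro rfl
    rw [power_zero] at h
    exact (one_lt_aleph0.trans_le hμ).ne' h
  have := nonempty_Iio_ord hθ
  have := nonempty_Iio_ord (aleph0_pos.trans_le hμ).ne'
  have hM : #(Iio μ.ord) = lift μ := by rw [mk_Iio_ordinal, card_ord]
  obtain ⟨e⟩ := Cardinal.eq.mp <| mk_patterns_eq (M := Iio μ.ord) (T := Iio θ.ord)
    (by rw [hM]; exact aleph0_le_lift.mpr hμ)
    (by rw [hM, mk_Iio_ordinal, card_ord, ← lift_power, ← h])
  obtain ⟨g⟩ := (le_def _ _).mp (mk_Fn_ord_two_power_le hμ)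
  exact sep1_of_separates ((separates_decode e).comp_right g.injective)

theorem stmt6 (μ θ : Cardinal) (hμ : ℵ₀ ≤ μ) (hθ : ℵ₀ ≤ θ) (h : μ = μ ^ θ) :
    Sep1 μ μ ((2 : Cardinal) ^ μ) θ θ :=
  stmt6_general μ θ hμ h

end BB
end

section
/- Let χ, μ, ∂, θ be cardinals with 2 ≤ ∂ and 2 ≤ θ, let κ be an infinite regular cardinal, and let 𝒟 be a nonempty upward-closed family of subsets of κ. If cf(∂^μ) > κ, then: Sep₂(χ, μ, ∂, θ, κ, 𝒟) implies Sep₃(cf(∂^μ); χ, μ, ∂, θ, κ, 𝒟), and Sep₃(cf(∂^μ); χ, μ, ∂, θ, κ, 𝒟) implies Sep₄(cf(∂^μ); χ, μ, ∂, θ, κ, 𝒟). -/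
/-!
Fix a bijection between `^μ∂` and the ordinals below `(∂^μ).ord`, a limit ordinal since its
cofinality exceeds `κ > 0`. The images of the initial segments cut off by a fundamental sequence of
length `cf(∂^μ)` form a strictly increasing chain of sets of size `< ∂^μ` exhausting `^μ∂`, and
`Sep₂` applied to the constant family at each link gives `Sep₃`. For `Sep₄`, replace each link `𝒫_ξ`
of a `Sep₃` chain by `^κ(𝒫_ξ)` (`seqIn`): constant sequences keep the chain strictly increasing,
and since `κ` is below the regular cardinal `λ = cf(∂^μ)`, the `κ` indices at which the terms of a
sequence enter the chain are bounded below `λ`, so the new chain exhausts `^κ(^μ∂)`.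
-/

open Cardinal Set

namespace BB

/-- `Sep₂(χ, μ, ∂, θ, κ, 𝒟)`. -/
def Sep2 (χ μ par θ κ : Cardinal) (𝒟 : Set (Set Ordinal)) : Prop :=
  ∃ f : Ordinal → Ordinal → (Ordinal → Ordinal) → Ordinal,
    (∀ ε < χ.ord, ∀ i < κ.ord, ∀ ν ∈ Fn μ.ord par.ord, f ε i ν < θ.ord) ∧
    ∀ P : Ordinal → Set (Ordinal → Ordinal),
      (∀ i < κ.ord, P i ⊆ Fn μ.ord par.ord ∧ Cardinal.mk (P i) < cLift (par ^ μ)) →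
      ∃ ϱ : Ordinal → Ordinal → Ordinal,
        (∀ i < κ.ord, ∀ ζ < μ.ord, ϱ i ζ < θ.ord) ∧
        ∀ ν : Ordinal → (Ordinal → Ordinal), (∀ i < κ.ord, ν i ∈ P i) →
          ∃ ε < χ.ord, ∃ u ∈ 𝒟, ∀ i ∈ u, f ε i (ν i) = ϱ i ε

/-- `[κ]^κ`, the family of subsets of `κ` of cardinality `κ`. -/
def fullFam (κ : Cardinal) : Set (Set Ordinal) :=
  {u | u ⊆ Set.Iio κ.ord ∧ Cardinal.mk u = cLift κ}

/-- `Sep₃(λ; χ, μ, ∂, θ, κ, 𝒟)`. -/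
def Sep3 (lam χ μ par θ κ : Cardinal) (𝒟 : Set (Set Ordinal)) : Prop :=
  ∃ f : Ordinal → Ordinal → (Ordinal → Ordinal) → Ordinal,
  ∃ P : Ordinal → Set (Ordinal → Ordinal),
    (∀ ε < χ.ord, ∀ i < κ.ord, ∀ ν ∈ Fn μ.ord par.ord, f ε i ν < θ.ord) ∧
    (∀ ξ < lam.ord, P ξ ⊆ Fn μ.ord par.ord) ∧
    (∀ ξ < lam.ord, ∀ ζ, ξ < ζ → ζ < lam.ord → P ξ ⊂ P ζ) ∧
    (∀ ν ∈ Fn μ.ord par.ord, ∃ ξ < lam.ord, ν ∈ P ξ) ∧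
    ∀ ξ < lam.ord, ∃ ϱ : Ordinal → Ordinal → Ordinal,
      (∀ i < κ.ord, ∀ ζ < μ.ord, ϱ i ζ < θ.ord) ∧
      ∀ ν : Ordinal → (Ordinal → Ordinal), (∀ i < κ.ord, ν i ∈ P ξ) →
        ∃ ε < χ.ord, ∃ u ∈ 𝒟, ∀ i ∈ u, f ε i (ν i) = ϱ i ε

/-- `^κ(^μ∂)`: κ-sequences of members of `^μ∂`, coded as functions vanishing
on `[κ, ∞)`. -/
def SeqFn (κo μo paro : Ordinal) : Set (Ordinal → Ordinal → Ordinal) :=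
  {ν | (∀ i < κo, ν i ∈ Fn μo paro) ∧ ∀ i, κo ≤ i → ν i = fun _ => 0}

/-- `Sep₄(λ; χ, μ, ∂, θ, κ, 𝒟)`. -/
def Sep4 (lam χ μ par θ κ : Cardinal) (𝒟 : Set (Set Ordinal)) : Prop :=
  ∃ f : Ordinal → Ordinal → (Ordinal → Ordinal) → Ordinal,
  ∃ P : Ordinal → Set (Ordinal → Ordinal → Ordinal),
    (∀ ε < χ.ord, ∀ i < κ.ord, ∀ ν ∈ Fn μ.ord par.ord, f ε i ν < θ.ord) ∧
    (∀ ξ < lam.ord, P ξ ⊆ SeqFn κ.ord μ.ord par.ord) ∧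
    (∀ ξ < lam.ord, ∀ ζ, ξ < ζ → ζ < lam.ord → P ξ ⊂ P ζ) ∧
    (∀ ν ∈ SeqFn κ.ord μ.ord par.ord, ∃ ξ < lam.ord, ν ∈ P ξ) ∧
    ∀ ξ < lam.ord, ∃ ϱ : Ordinal → Ordinal → Ordinal,
      (∀ i < κ.ord, ∀ ζ < μ.ord, ϱ i ζ < θ.ord) ∧
      ∀ ν ∈ P ξ, ∃ ε < χ.ord, ∃ u ∈ 𝒟, ∀ i ∈ u, f ε i (ν i) = ϱ i ε

universe u v

theorem exists_strictMonoOn_cofinal (o : Ordinal) :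
    ∃ g : Ordinal → Ordinal, StrictMonoOn g (Iio o.cof.ord) ∧ (∀ ξ < o.cof.ord, g ξ < o) ∧
      ∀ β < o, ∃ ξ < o.cof.ord, β ≤ g ξ := by
  obtain ⟨f, hf⟩ := Ordinal.exists_isFundamentalSeq (o := o) rfl
  refine ⟨fun ξ => if h : ξ < o.cof.ord then f ⟨ξ, h⟩ else 0, ?_, fun ξ hξ => ?_, fun β hβ => ?_⟩
  · intro ξ hξ ζ hζ h
    simp only [dif_pos (mem_Iio.mp hξ), dif_pos (mem_Iio.mp hζ)]
    exact hf.strictMono (Subtype.mk_lt_mk.mpr h)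
  · simpa only [dif_pos hξ] using mem_Iio.mp (f ⟨ξ, hξ⟩).2
  · obtain ⟨_, ⟨⟨ξ, hξ⟩, rfl⟩, h⟩ := hf.isCofinal_range ⟨β, hβ⟩
    exact ⟨ξ, hξ, by simpa [mem_Iio.mp hξ] using Subtype.mk_le_mk.mp h⟩

theorem exists_strictMonoOn_small_cover {α : Type u} {X : Set α} {c : Cardinal.{v}}
    (hX : Cardinal.lift.{v} #X = Cardinal.lift.{u} c) (hc : Order.IsSuccLimit c.ord) :
    ∃ P : Ordinal.{v} → Set α, StrictMonoOn P (Iio c.ord.cof.ord) ∧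
      (∀ ξ < c.ord.cof.ord, P ξ ⊆ X ∧ Cardinal.lift.{v} #(P ξ) < Cardinal.lift.{u} c) ∧
      ∀ x ∈ X, ∃ ξ < c.ord.cof.ord, x ∈ P ξ := by
  obtain ⟨g, hg_mono, hg_lt, hg_cofinal⟩ := exists_strictMonoOn_cofinal c.ord
  obtain ⟨e⟩ : Nonempty (Iio c.ord ≃ X) := by
    rw [← lift_mk_eq'.{v+1, u}, mk_Iio_ordinal, card_ord]
    apply_fun Cardinal.lift.{v+1} at hX
    simpa using hX.symm
  set j : Iio c.ord → α := fun β => e β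
  have hj : Function.Injective j := Subtype.val_injective.comp e.injective
  refine ⟨fun ξ => j '' (Subtype.val ⁻¹' Iio (g ξ)), ?_, fun ξ hξ => ⟨?_, ?_⟩, ?_⟩
  · intro ξ hξ ζ hζ hξζ
    refine hj.image_strictMono (ssubset_iff_of_subset ?_ |>.mpr ?_)
    · exact preimage_mono (Iio_subset_Iio (hg_mono hξ hζ hξζ).le)
    · exact ⟨⟨g ξ, hg_lt ξ hξ⟩, hg_mono hξ hζ hξζ, lt_irrefl (g ξ)⟩
  · rintro _ ⟨β, -, rfl⟩
    exact (e β).2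
  · have h1 := mk_image_eq_lift j (Subtype.val ⁻¹' Iio (g ξ)) hj
    have h2 := mk_preimage_of_injective (Subtype.val : Iio c.ord → Ordinal.{v}) (Iio (g ξ))
      Subtype.val_injective
    rw [mk_Iio_ordinal] at h2
    rw [← Cardinal.lift_lt.{_, v+1}, Cardinal.lift_lift, h1]
    calc Cardinal.lift.{u} #(Subtype.val ⁻¹' Iio (g ξ) : Set (Iio c.ord))
        ≤ Cardinal.lift.{u} (Cardinal.lift.{v+1} (g ξ).card) := Cardinal.lift_le.mpr h2
      _ < _ := by simp only [Cardinal.lift_lift, Cardinal.lift_lt]; exact lt_ord.mp (hg_lt ξ hξ)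
  · intro x hx
    obtain ⟨ξ, hξ, hle⟩ := hg_cofinal _ (hc.add_one_lt (e.symm ⟨x, hx⟩).2)
    exact ⟨ξ, hξ, e.symm ⟨x, hx⟩, Order.add_one_le_iff.mp hle, by simp [j]⟩

noncomputable def fnEquiv (a b : Ordinal) : Fn a b ≃ (Iio a → Iio b) where
  toFun ν α := ⟨ν.1 α, ν.2.1 α α.2⟩
  invFun g := ⟨fun α => if h : α < a then g ⟨α, h⟩ else 0,
    fun α hα => by simp only [dif_pos hα]; exact (g ⟨α, hα⟩).2, fun α hα => by simp [not_lt.mpr hα]⟩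
  left_inv ν := by
    ext α
    by_cases h : α < a
    · simp [h]
    · simpa [h] using (ν.2.2 α (not_lt.mp h)).symm
  right_inv g := by
    ext α
    simp [mem_Iio.mp α.2]

theorem mk_Fn (a b : Ordinal.{u}) : #(Fn a b) = Cardinal.lift.{u+1} (b.card ^ a.card) := by
  rw [Cardinal.mk_congr (fnEquiv a b), ← Cardinal.power_def, mk_Iio_ordinal, mk_Iio_ordinal,
    ← Cardinal.lift_power]

def seqIn (κo μo paro : Ordinal) (S : Set (Ordinal → Ordinal)) :
    Set (Ordinal → Ordinal → Ordinal) :=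
  {ν | ν ∈ SeqFn κo μo paro ∧ ∀ i < κo, ν i ∈ S}

section seqIn

variable {κo : Ordinal.{u}} {μo paro : Ordinal}

theorem seqIn_mono {S T : Set (Ordinal → Ordinal)} (hST : S ⊆ T) :
    seqIn κo μo paro S ⊆ seqIn κo μo paro T :=
  fun _ hν => ⟨hν.1, fun i hi => hST (hν.2 i hi)⟩

theorem seqIn_ssubset_seqIn {S T : Set (Ordinal → Ordinal)} (hκo : 0 < κo)
    (hT : T ⊆ Fn μo paro) (hST : S ⊂ T) : seqIn κo μo paro S ⊂ seqIn κo μo paro T := by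
  obtain ⟨x, hxT, hxS⟩ := exists_of_ssubset hST
  let ν : Ordinal → Ordinal → Ordinal := fun i => if i < κo then x else fun _ => 0
  refine ssubset_iff_of_subset (seqIn_mono hST.subset) |>.mpr
    ⟨ν, ⟨⟨fun i hi => ?_, fun i hi => ?_⟩, fun i hi => ?_⟩, fun hν => hxS ?_⟩
  · simpa [ν, hi] using hT hxT
  · simp [ν, not_lt.mpr hi]
  · simpa [ν, hi] using hxT
  · simpa [ν, hκo] using hν.2 0 hκo

theorem exists_mem_seqIn_of_card_lt_cof {l : Ordinal.{u}} {P : Ordinal → Set (Ordinal → Ordinal)}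
    (hP : MonotoneOn P (Iio l)) (hcover : ∀ x ∈ Fn μo paro, ∃ ξ < l, x ∈ P ξ)
    (hκo : κo.card < l.cof) {ν : Ordinal → Ordinal → Ordinal} (hν : ν ∈ SeqFn κo μo paro) :
    ∃ ξ < l, ν ∈ seqIn κo μo paro (P ξ) := by
  choose Ξ hΞl hΞ using fun (i : Iio κo) => hcover (ν i) (hν.1 i i.2)
  have hsup : ⨆ i, Ξ i < l := by
    refine Ordinal.lift_iSup_lt_of_lt_cof ?_ hΞl
    rwa [Cardinal.lift_id'.{u, u + 1}, mk_Iio_ordinal, ← Ordinal.lift_cof, Cardinal.lift_lt]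
  refine ⟨⨆ i, Ξ i, hsup, hν, fun i hi => ?_⟩
  exact hP (hΞl ⟨i, hi⟩) hsup (Ordinal.le_iSup Ξ ⟨i, hi⟩) (hΞ ⟨i, hi⟩)

end seqIn

section Sep

variable {χ μ par θ κ : Cardinal} {𝒟 : Set (Set Ordinal)}

theorem sep3_of_sep2 (hlim : Order.IsSuccLimit (par ^ μ).ord) (h : Sep2 χ μ par θ κ 𝒟) :
    Sep3 ((par ^ μ).ord).cof χ μ par θ κ 𝒟 := by
  obtain ⟨f, hf, hsep⟩ := h
  have hFn : Cardinal.lift.{0} #(Fn μ.ord par.ord) = Cardinal.lift.{1} (par ^ μ) := by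
    rw [Cardinal.lift_uzero, mk_Fn, card_ord, card_ord]
  obtain ⟨P, hmono, hsmall, hcover⟩ := exists_strictMonoOn_small_cover hFn hlim
  refine ⟨f, P, hf, fun ξ hξ => (hsmall ξ hξ).1, fun ξ hξ ζ h hζ => hmono hξ hζ h, hcover,
    fun ξ hξ => hsep (fun _ => P ξ) fun _ _ => ?_⟩
  simpa using hsmall ξ hξ

theorem sep4_of_sep3 {lam : Cardinal} (hκ : 0 < κ) (hlam : κ < lam.ord.cof)
    (h : Sep3 lam χ μ par θ κ 𝒟) : Sep4 lam χ μ par θ κ 𝒟 := by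
  obtain ⟨f, P, hf, hsub, hmono, hcover, hsep⟩ := h
  have hP : MonotoneOn P (Iio lam.ord) :=
    StrictMonoOn.monotoneOn fun ξ hξ ζ hζ h => hmono ξ hξ ζ h hζ
  refine ⟨f, fun ξ => seqIn κ.ord μ.ord par.ord (P ξ), hf, fun _ _ _ hν => hν.1,
    fun ξ hξ ζ h hζ => seqIn_ssubset_seqIn (ord_pos.mpr hκ) (hsub ζ hζ) (hmono ξ hξ ζ h hζ),
    fun ν hν => exists_mem_seqIn_of_card_lt_cof hP hcover (by rwa [card_ord]) hν,
    fun ξ hξ => ?_⟩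
  obtain ⟨ϱ, hϱ, hsep⟩ := hsep ξ hξ
  exact ⟨ϱ, hϱ, fun ν hν => hsep ν hν.2⟩

end Sep

theorem stmt10_general (χ μ par θ κ : Cardinal) (𝒟 : Set (Set Ordinal))
    (hκ : κ.IsRegular)
    (hcf : κ < ((par ^ μ).ord).cof) :
    (Sep2 χ μ par θ κ 𝒟 → Sep3 ((par ^ μ).ord).cof χ μ par θ κ 𝒟) ∧
    (Sep3 ((par ^ μ).ord).cof χ μ par θ κ 𝒟 →
      Sep4 ((par ^ μ).ord).cof χ μ par θ κ 𝒟) := by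
  have hlim : Order.IsSuccLimit (par ^ μ).ord :=
    Ordinal.one_lt_cof_iff.mp ((Cardinal.one_le_iff_pos.mpr hκ.pos).trans_lt hcf)
  exact ⟨sep3_of_sep2 hlim, sep4_of_sep3 hκ.pos (by rwa [Ordinal.cof_ord_cof])⟩

theorem stmt10 (χ μ par θ κ : Cardinal) (𝒟 : Set (Set Ordinal))
    (hpar2 : 2 ≤ par) (hθ2 : 2 ≤ θ) (hκ : κ.IsRegular)
    (h𝒟ne : 𝒟.Nonempty) (h𝒟sub : ∀ u ∈ 𝒟, u ⊆ Set.Iio κ.ord)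
    (h𝒟up : ∀ u ∈ 𝒟, ∀ v, u ⊆ v → v ⊆ Set.Iio κ.ord → v ∈ 𝒟)
    (hcf : κ < ((par ^ μ).ord).cof) :
    (Sep2 χ μ par θ κ 𝒟 → Sep3 ((par ^ μ).ord).cof χ μ par θ κ 𝒟) ∧
    (Sep3 ((par ^ μ).ord).cof χ μ par θ κ 𝒟 →
      Sep4 ((par ^ μ).ord).cof χ μ par θ κ 𝒟) :=
  stmt10_general χ μ par θ κ 𝒟 hκ hcf

end BB
end

section
/- If κ ≤ μ are infinite cardinals with κ regular and μ = μ^{<κ} < μ^κ, then trp⁺_κ(μ) = (μ^κ)⁺; in particular, there is a subtree of ^{κ>}μ of cardinality μ with exactly μ^κ many κ-branches. -/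
/-! The full tree `^{κ>}μ` is a subtree of itself whose `κ`-branches are all of `^κμ`.
It has `Σ_{i<κ} μ^|i| = μ^{<κ} = μ` nodes, so it realises the largest possible number `μ^κ`
of branches, and `trp⁺_κ(μ)` is the successor of that number. -/

open Cardinal Set

namespace BB

noncomputable def trunc (f : Ordinal → Ordinal) (i : Ordinal) : Ordinal → Ordinal :=
  fun j => if j < i then f j else 0

def TreeElems (κo μo : Ordinal) : Set (Ordinal × (Ordinal → Ordinal)) :=
  {p | p.1 < κo ∧ (∀ j < p.1, p.2 j < μo) ∧ ∀ j, p.1 ≤ j → p.2 j = 0}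

def IsSubtree (κo μo : Ordinal) (T : Set (Ordinal × (Ordinal → Ordinal))) : Prop :=
  T ⊆ TreeElems κo μo ∧ ∀ p ∈ T, ∀ j < p.1, (j, trunc p.2 j) ∈ T

def branches (κo μo : Ordinal) (T : Set (Ordinal × (Ordinal → Ordinal))) :
    Set (Ordinal → Ordinal) :=
  {η | η ∈ Fn κo μo ∧ ∀ i < κo, (i, trunc η i) ∈ T}

noncomputable def trpPlus (κ μ : Cardinal) : Cardinal :=
  sInf {lam : Cardinal | ¬ ∃ T : Set (Ordinal × (Ordinal → Ordinal)),
    IsSubtree κ.ord μ.ord T ∧ Cardinal.mk T ≤ cLift μ ∧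
      cLift lam ≤ Cardinal.mk (branches κ.ord μ.ord T)}

universe u

noncomputable def fnEquivFun (a b : Ordinal.{u}) : Fn a b ≃ (Iio a → Iio b) where
  toFun ν α := ⟨ν.1 α, ν.2.1 α α.2⟩
  invFun f := ⟨fun α => if h : α < a then (f ⟨α, h⟩).1 else 0,
    fun α hα => (dif_pos hα).trans_lt (f ⟨α, hα⟩).2,
    fun α hα => by simp [not_lt.2 hα]⟩
  left_inv ν := by
    ext α
    by_cases h : α < a
    · simp [h]
    · simp [h, ν.2.2 α (not_lt.1 h)]
  right_inv f := funext fun α => Subtype.ext (dif_pos α.2)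

theorem mk_fn (a b : Ordinal.{u}) : #(Fn a b) = lift.{u + 1} (b.card ^ a.card) := by
  rw [mk_congr (fnEquivFun a b), mk_arrow, mk_Iio_ordinal, mk_Iio_ordinal, lift_id, lift_id,
    ← lift_power]

def treeElemsEquivSigma (κo μo : Ordinal.{u}) :
    TreeElems κo μo ≃ Σ i : Iio κo, Fn i.1 μo where
  toFun p := ⟨⟨p.1.1, p.2.1⟩, ⟨p.1.2, p.2.2.1, p.2.2.2⟩⟩
  invFun x := ⟨(x.1.1, x.2.1), x.1.2, x.2.2.1, x.2.2.2⟩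

theorem mk_treeElems (κo μo : Ordinal.{u}) :
    #(TreeElems κo μo) = sum fun i : Iio κo => lift.{u + 1} (μo.card ^ i.1.card) := by
  simp only [mk_congr (treeElemsEquivSigma κo μo), mk_sigma, mk_fn]

theorem mk_treeElems_ord {κ μ : Cardinal.{u}} (hκ : ℵ₀ ≤ κ) (hκμ : κ ≤ μ) :
    #(TreeElems κ.ord μ.ord) = lift.{u + 1} (μ ^< κ) := by
  rw [mk_treeElems, card_ord]
  apply le_antisymm
  · have hκ_le : κ ≤ μ ^< κ :=
      calc κ ≤ μ := hκμ
        _ = μ ^ (1 : Cardinal) := (power_one μ).symm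
        _ ≤ μ ^< κ := le_powerlt μ (one_lt_aleph0.trans_le hκ)
    calc (sum fun i : Iio κ.ord => lift.{u + 1} (μ ^ i.1.card))
        ≤ sum fun _ : Iio κ.ord => lift.{u + 1} (μ ^< κ) :=
          sum_le_sum _ _ fun i => lift_le.2 (le_powerlt μ (lt_ord.1 i.2))
      _ = lift.{u + 1} (κ * μ ^< κ) := by
          rw [sum_const', mk_Iio_ordinal, card_ord, lift_mul]
      _ = lift.{u + 1} (μ ^< κ) := by
          rw [mul_eq_right (hκ.trans hκ_le) hκ_le (aleph0_pos.trans_le hκ).ne']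
  · by_contra! hlt
    obtain ⟨c, hc, hc_eq⟩ := lt_lift_iff.1 hlt
    refine hc.not_ge (powerlt_le.2 fun x hx => lift_le.1 ?_)
    rw [hc_eq]
    simpa using le_sum.{u + 1, u + 1} (fun i : Iio κ.ord => lift.{u + 1} (μ ^ i.1.card))
      ⟨x.ord, ord_lt_ord.2 hx⟩

theorem treeElems_isSubtree (κo μo : Ordinal) : IsSubtree κo μo (TreeElems κo μo) := by
  refine ⟨subset_rfl, fun p hp j hj => ⟨hj.trans hp.1, fun k hk => ?_, fun k hk => ?_⟩⟩
  · simpa [trunc, hk] using hp.2.1 k (hk.trans hj)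
  · simp [trunc, not_lt.2 hk]

theorem branches_treeElems (κo μo : Ordinal) :
    branches κo μo (TreeElems κo μo) = Fn κo μo := by
  ext η
  refine ⟨fun h => h.1, fun h => ⟨h, fun i hi => ⟨hi, fun j hj => ?_, fun j hj => ?_⟩⟩⟩
  · simpa [trunc, hj] using h.1 j (hj.trans hi)
  · simp [trunc, not_lt.2 hj]

theorem mk_branches_treeElems (κ μ : Cardinal.{u}) :
    #(branches κ.ord μ.ord (TreeElems κ.ord μ.ord)) = lift.{u + 1} (μ ^ κ) := by
  rw [branches_treeElems, mk_fn, card_ord, card_ord]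

theorem mk_branches_le (κ μ : Cardinal.{u}) (T : Set (Ordinal.{u} × (Ordinal → Ordinal))) :
    #(branches κ.ord μ.ord T) ≤ lift.{u + 1} (μ ^ κ) := by
  simpa [mk_fn] using mk_le_mk_of_subset fun η (hη : η ∈ branches κ.ord μ.ord T) => hη.1

theorem trpPlus_eq_succ_power {κ μ : Cardinal.{0}} (hμ : #(TreeElems κ.ord μ.ord) ≤ cLift μ) :
    trpPlus κ μ = Order.succ (μ ^ κ) := by
  have h_succ_mem : Order.succ (μ ^ κ) ∈
      {lam : Cardinal | ¬ ∃ T : Set (Ordinal × (Ordinal → Ordinal)),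
        IsSubtree κ.ord μ.ord T ∧ #T ≤ cLift μ ∧ cLift lam ≤ #(branches κ.ord μ.ord T)} := by
    rintro ⟨T, -, -, hT⟩
    exact (Order.lt_succ (μ ^ κ)).not_ge (lift_le.1 (hT.trans (mk_branches_le κ μ T)))
  refine le_antisymm (csInf_le' h_succ_mem) (le_csInf ⟨_, h_succ_mem⟩ fun lam hlam => ?_)
  by_contra! hlt
  refine hlam ⟨TreeElems κ.ord μ.ord, treeElems_isSubtree _ _, hμ, ?_⟩
  exact (mk_branches_treeElems κ μ).symm ▸ lift_le.2 (Order.lt_succ_iff.1 hlt)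

theorem stmt17_general (κ μ : Cardinal) (hκ : κ.IsRegular) (hκμ : κ ≤ μ)
    (h1 : μ = μ ^< κ) :
    trpPlus κ μ = Order.succ (μ ^ κ) ∧
    ∃ T : Set (Ordinal × (Ordinal → Ordinal)),
      IsSubtree κ.ord μ.ord T ∧ Cardinal.mk T = cLift μ ∧
      Cardinal.mk (branches κ.ord μ.ord T) = cLift (μ ^ κ) := by
  have h_size : #(TreeElems κ.ord μ.ord) = cLift μ := by
    rw [mk_treeElems_ord hκ.aleph0_le hκμ, ← h1]
  exact ⟨trpPlus_eq_succ_power h_size.le, TreeElems κ.ord μ.ord, treeElems_isSubtree _ _,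
    h_size, mk_branches_treeElems κ μ⟩

theorem stmt17 (κ μ : Cardinal) (hκ : κ.IsRegular) (hκμ : κ ≤ μ) (hμ : ℵ₀ ≤ μ)
    (h1 : μ = μ ^< κ) (h2 : μ < μ ^ κ) :
    trpPlus κ μ = Order.succ (μ ^ κ) ∧
    ∃ T : Set (Ordinal × (Ordinal → Ordinal)),
      IsSubtree κ.ord μ.ord T ∧ Cardinal.mk T = cLift μ ∧
      Cardinal.mk (branches κ.ord μ.ord T) = cLift (μ ^ κ) :=
  stmt17_general κ μ hκ hκμ h1

end BB
end

section
/- Let κ be an infinite regular cardinal, J := [κ]^{<κ} the ideal of subsets of κ of cardinality < κ, and Ā = ⟨A_ε : ε < κ⟩ a sequence of sets with |A_ε| ≥ 2^κ for every ε < κ. Assume that for every u ⊆ κ of cardinality κ, T⁺_{J↾u}(Ā↾u) = T⁺_J(Ā), where J↾u := {a ⊆ u : |a| < κ}. Then 𝐓⁺_J(Ā) = T⁺_J(Ā). -/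
open Cardinal Set

namespace BB

/-- Witnessing families for `T⁺_J(Ā)`, over the index set `X`: families of
total functions with values in `A i ∪ {0}` on `X` (and `0` off `X`),
any two of which differ in a `J`-large way. -/
def TWit (X : Set Ordinal) (J : Set (Set Ordinal)) (A : Ordinal → Set Ordinal)
    (Λ : Set (Ordinal → Ordinal)) : Prop :=
  (∀ η ∈ Λ, (∀ i ∈ X, η i ∈ A i ∪ {0}) ∧ ∀ i, i ∉ X → η i = 0) ∧
  ∀ η ∈ Λ, ∀ ν ∈ Λ, η ≠ ν →
    (X \ {i | i ∈ X ∧ η i ≠ 0 ∧ ν i ≠ 0 ∧ η i ≠ ν i}) ∈ J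

/-- `T⁺_J(Ā)`: the least `λ` such that there is no witnessing family of
cardinality `≥ λ`. -/
noncomputable def Tplus (X : Set Ordinal) (J : Set (Set Ordinal))
    (A : Ordinal → Set Ordinal) : Cardinal :=
  sInf {lam : Cardinal |
    ¬ ∃ Λ : Set (Ordinal → Ordinal), TWit X J A Λ ∧ cLift lam ≤ Cardinal.mk Λ}

/-- Witnessing families for `𝐓⁺_J(Ā)`: families of partial functions, coded as
pairs `(dom, values)` with domain in `J⁺`, any two of which agree only on a
`J`-small set. -/
def BTWit (X : Set Ordinal) (J : Set (Set Ordinal)) (A : Ordinal → Set Ordinal)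
    (Λ : Set ((Set Ordinal) × (Ordinal → Ordinal))) : Prop :=
  (∀ p ∈ Λ, p.1 ⊆ X ∧ p.1 ∉ J ∧ (∀ i ∈ p.1, p.2 i ∈ A i ∪ {0}) ∧
    ∀ i, i ∉ p.1 → p.2 i = 0) ∧
  ∀ p ∈ Λ, ∀ q ∈ Λ, p ≠ q → {i | i ∈ p.1 ∩ q.1 ∧ p.2 i = q.2 i} ∈ J

/-- `𝐓⁺_J(Ā)`. -/
noncomputable def BTplus (X : Set Ordinal) (J : Set (Set Ordinal))
    (A : Ordinal → Set Ordinal) : Cardinal :=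
  sInf {lam : Cardinal |
    ¬ ∃ Λ : Set ((Set Ordinal) × (Ordinal → Ordinal)),
      BTWit X J A Λ ∧ cLift lam ≤ Cardinal.mk Λ}

/-!
A `T⁺`-family on `κ` is a `𝐓⁺`-family with domain `κ`, so only the converse needs work, and
below `2^κ` it is trivial because every `A ε` has `2^κ` elements. In a `𝐓⁺`-family the members
with support of size `< κ` are determined by their domains, so there are at most `2^κ` of them.
The other members are determined by their values, and those with a given support `u` form a
`T⁺`-family for `J↾u`, which the hypothesis on restrictions moves to `κ` with the same size (up
to `λ`). Finally, at most `2^κ` many `T⁺`-families on `κ` merge into one of their total size by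
coding the index of the family into the values, which `|A ε| ≥ 2^κ` leaves room for; comparing
sizes, a `𝐓⁺`-family of size `λ > 2^κ` yields a `T⁺`-family of size `λ`.
-/

open Function (support)

def smallIdeal (κ : Cardinal.{0}) (u : Set Ordinal.{0}) : Set (Set Ordinal.{0}) :=
  {a | a ⊆ u ∧ #a < cLift κ}

def HasTWit (X : Set Ordinal.{0}) (J : Set (Set Ordinal)) (A : Ordinal.{0} → Set Ordinal.{0})
    (lam : Cardinal.{0}) : Prop :=
  ∃ Λ : Set (Ordinal.{0} → Ordinal.{0}), TWit X J A Λ ∧ cLift lam ≤ #Λ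

def HasBTWit (X : Set Ordinal.{0}) (J : Set (Set Ordinal)) (A : Ordinal.{0} → Set Ordinal.{0})
    (lam : Cardinal.{0}) : Prop :=
  ∃ Λ : Set (Set Ordinal.{0} × (Ordinal.{0} → Ordinal.{0})), BTWit X J A Λ ∧ cLift lam ≤ #Λ

theorem isLowerSet_smallIdeal (κ : Cardinal.{0}) (u : Set Ordinal) :
    IsLowerSet (smallIdeal κ u) :=
  fun _ _ hba ha => ⟨hba.trans ha.1, (mk_le_mk_of_subset hba).trans_lt ha.2⟩

theorem empty_mem_smallIdeal {κ : Cardinal.{0}} (hκ : κ ≠ 0) (u : Set Ordinal) :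
    ∅ ∈ smallIdeal κ u :=
  ⟨empty_subset u, by simpa [pos_iff_ne_zero] using hκ⟩

theorem mk_union_union_lt {α : Type*} {c : Cardinal} (hc : ℵ₀ ≤ c) {s t r : Set α}
    (hs : #s < c) (ht : #t < c) (hr : #r < c) : #(s ∪ t ∪ r : Set α) < c :=
  (mk_union_le _ _).trans_lt <|
    add_lt_of_lt hc ((mk_union_le _ _).trans_lt (add_lt_of_lt hc hs ht)) hr

theorem imp_of_sInf_setOf_not_eq {P Q : Cardinal → Prop} (hP : Antitone P) (hQ : Q 0)
    (h : sInf {a | ¬P a} = sInf {a | ¬Q a}) {a : Cardinal} (ha : P a) : Q a := by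
  by_contra hQa
  rcases eq_empty_or_nonempty {a | ¬P a} with hempty | hne
  · have hQ0 := csInf_mem (s := {a | ¬Q a}) ⟨a, hQa⟩
    rw [← h, hempty, Cardinal.sInf_empty] at hQ0
    exact hQ0 hQ
  · exact csInf_mem hne (hP (h ▸ csInf_le' hQa) ha)

section Witnesses

variable {X : Set Ordinal.{0}} {J : Set (Set Ordinal)} {A : Ordinal.{0} → Set Ordinal.{0}}

theorem hasTWit_zero : HasTWit X J A 0 :=
  ⟨∅, ⟨by simp, by simp⟩, by simp⟩

theorem hasTWit_antitone : Antitone (HasTWit X J A) :=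
  fun _ _ hab ⟨Λ, hΛ, hb⟩ => ⟨Λ, hΛ, (lift_le.2 hab).trans hb⟩

theorem HasTWit.of_Tplus_eq {X' : Set Ordinal.{0}} {J' : Set (Set Ordinal)}
    (h : Tplus X' J' A = Tplus X J A) {lam : Cardinal.{0}} (hlam : HasTWit X' J' A lam) :
    HasTWit X J A lam :=
  imp_of_sInf_setOf_not_eq hasTWit_antitone hasTWit_zero h hlam

theorem HasTWit.hasBTWit (hJ : IsLowerSet J) (hX : X ∉ J) {lam : Cardinal.{0}}
    (h : HasTWit X J A lam) : HasBTWit X J A lam := by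
  obtain ⟨Λ, hΛ, hlam⟩ := h
  refine ⟨(X, ·) '' Λ, ⟨?_, ?_⟩, ?_⟩
  · rintro _ ⟨η, hη, rfl⟩
    exact ⟨subset_rfl, hX, (hΛ.1 η hη).1, (hΛ.1 η hη).2⟩
  · rintro _ ⟨η, hη, rfl⟩ _ ⟨ν, hν, rfl⟩ hne
    refine hJ ?_ (hΛ.2 η hη ν hν fun e => hne (e ▸ rfl))
    exact fun i hi => ⟨hi.1.1, fun hdiff => hdiff.2.2.2 hi.2⟩
  · rwa [mk_image_eq_of_injOn _ Λ (Prod.mk_right_injective X).injOn]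

theorem exists_twit_mk_sigma_le (hX : X.Nonempty) (hJ : IsLowerSet J) (hJ0 : ∅ ∈ J)
    (h0 : ∀ ε ∈ X, 0 ∉ A ε) (hA : ∀ ε ∈ X, ℵ₀ ≤ #(A ε)) {I : Type 1}
    (hI : ∀ ε ∈ X, #I ≤ #(A ε)) (F : I → Set (Ordinal.{0} → Ordinal.{0}))
    (hF : ∀ i, TWit X J A (F i)) :
    ∃ G : Set (Ordinal.{0} → Ordinal.{0}), TWit X J A G ∧ #(Σ i, F i) ≤ #G := by
  classical
  have hcode : ∀ ε ∈ X, Nonempty (I × ↥(A ε ∪ {0}) ↪ A ε) := by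
    intro ε hε
    rw [← le_def, mk_prod, lift_id, lift_id]
    calc #I * #↥(A ε ∪ {0}) ≤ #(A ε) * (#(A ε) + 1) := by
          gcongr
          · exact hI ε hε
          · exact (mk_union_le _ _).trans (by rw [mk_singleton])
      _ = #(A ε) := by rw [add_one_eq (hA ε hε), mul_eq_self (hA ε hε)]
  let code (ε : Ordinal) (hε : ε ∈ X) := (hcode ε hε).some
  -- tagging with the index `i` makes functions coming from different families disagree everywhere
  let tag (x : Σ i, F i) (ε : Ordinal) : Ordinal :=
    if hε : ε ∈ X then code ε hε (x.1, ⟨x.2.1 ε, ((hF x.1).1 _ x.2.2).1 ε hε⟩) else 0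
  have tag_mem (x) (ε) (hε : ε ∈ X) : tag x ε ∈ A ε := by
    simp only [tag, dif_pos hε]
    exact Subtype.prop _
  have tag_ne_zero (x) (ε) (hε : ε ∈ X) : tag x ε ≠ 0 := fun h => h0 ε hε (h ▸ tag_mem x ε hε)
  have eq_of_tag_eq (x y) (ε) (hε : ε ∈ X) (h : tag x ε = tag y ε) :
      x.1 = y.1 ∧ x.2.1 ε = y.2.1 ε := by
    simp only [tag, dif_pos hε] at h
    have := (code ε hε).injective (Subtype.ext h)
    exact ⟨congrArg Prod.fst this, congrArg (fun p => (p.2 : Ordinal)) this⟩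
  have tag_injective : Function.Injective tag := by
    rintro ⟨i, η, hη⟩ ⟨j, ν, hν⟩ h
    obtain ⟨ε₀, hε₀⟩ := hX
    obtain rfl : i = j := (eq_of_tag_eq ⟨i, η, hη⟩ ⟨j, ν, hν⟩ ε₀ hε₀ (congrFun h ε₀)).1
    have hην : η = ν := funext fun ε => by
      by_cases hε : ε ∈ X
      · exact (eq_of_tag_eq _ _ ε hε (congrFun h ε)).2
      · rw [((hF i).1 η hη).2 ε hε, ((hF i).1 ν hν).2 ε hε]
    subst hην
    rfl
  refine ⟨range tag, ⟨?_, ?_⟩, ?_⟩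
  · rintro _ ⟨x, rfl⟩
    exact ⟨fun ε hε => Or.inl (tag_mem x ε hε), fun ε hε => by simp [tag, hε]⟩
  · rintro _ ⟨⟨i, η, hη⟩, rfl⟩ _ ⟨⟨j, ν, hν⟩, rfl⟩ hne
    by_cases hij : i = j
    · subst hij
      refine hJ ?_ ((hF i).2 η hη ν hν fun e => hne (by subst e; rfl))
      rintro ε ⟨hε, hεD⟩
      refine ⟨hε, fun hD => hεD ⟨hε, tag_ne_zero _ ε hε, tag_ne_zero _ ε hε, fun h => ?_⟩⟩
      exact hD.2.2.2 (eq_of_tag_eq _ _ ε hε h).2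
    · refine hJ ?_ hJ0
      rintro ε ⟨hε, hεD⟩
      exact hεD ⟨hε, tag_ne_zero _ ε hε, tag_ne_zero _ ε hε,
        fun h => hij (eq_of_tag_eq ⟨i, η, hη⟩ ⟨j, ν, hν⟩ ε hε h).1⟩
  · rw [← mk_range_eq _ tag_injective]

theorem hasTWit_of_lift_le_mk (hX : X.Nonempty) (hJ : IsLowerSet J) (hJ0 : ∅ ∈ J)
    (h0 : ∀ ε ∈ X, 0 ∉ A ε) (hA : ∀ ε ∈ X, ℵ₀ ≤ #(A ε)) {lam : Cardinal.{0}}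
    (hlam : ∀ ε ∈ X, cLift lam ≤ #(A ε)) : HasTWit X J A lam := by
  have hAne : ∀ ε ∈ X, (A ε).Nonempty := fun ε hε =>
    nonempty_coe_sort.1 (mk_ne_zero_iff.1 (aleph0_pos.trans_le (hA ε hε)).ne')
  choose! a ha using hAne
  have hη : TWit X J A {X.indicator a} := by
    refine ⟨?_, fun η hη ν hν hne => absurd (hη.trans hν.symm) hne⟩
    rintro _ rfl
    exact ⟨fun ε hε => Or.inl (by rw [indicator_of_mem hε]; exact ha ε hε),
      fun ε hε => indicator_of_notMem hε a⟩
  obtain ⟨G, hG, hsum⟩ := exists_twit_mk_sigma_le (I := ULift.{1} lam.out) hX hJ hJ0 h0 hA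
    (by simpa only [mk_uLift, mk_out] using hlam) (fun _ => {X.indicator a}) (fun _ => hη)
  refine ⟨G, hG, ?_⟩
  simpa only [mk_sigma, mk_singleton, sum_const', mk_uLift, mk_out, mul_one] using hsum

end Witnesses

def largeSubsets (κ : Cardinal.{0}) (X : Set Ordinal.{0}) : Set (Set Ordinal.{0}) :=
  {u | u ⊆ X ∧ #u = cLift κ}

section SupportFibers

variable {κ : Cardinal.{0}} {X : Set Ordinal.{0}} {J : Set (Set Ordinal)}
  {A : Ordinal.{0} → Set Ordinal.{0}} {Λ : Set (Set Ordinal.{0} × (Ordinal.{0} → Ordinal.{0}))}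

def supportFiber (Λ : Set (Set Ordinal.{0} × (Ordinal.{0} → Ordinal.{0}))) (u : Set Ordinal.{0}) :
    Set (Ordinal.{0} → Ordinal.{0}) :=
  {f ∈ Prod.snd '' Λ | support f = u}

theorem BTWit.support_subset (hΛ : BTWit X J A Λ) {p : Set Ordinal × (Ordinal → Ordinal)}
    (hp : p ∈ Λ) : support p.2 ⊆ p.1 :=
  fun ε hε => by_contra fun h => hε ((hΛ.1 p hp).2.2.2 ε h)

theorem BTWit.injOn_fst_of_small_support (hκ : ℵ₀ ≤ κ) (hΛ : BTWit X (smallIdeal κ X) A Λ) :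
    InjOn Prod.fst {p ∈ Λ | #(support p.2) < cLift κ} := by
  rintro p ⟨hp, hps⟩ q ⟨hq, hqs⟩ hpq
  by_contra hne
  have hcover : p.1 ⊆ {ε | ε ∈ p.1 ∩ q.1 ∧ p.2 ε = q.2 ε} ∪ support p.2 ∪
      support q.2 := by
    intro ε hε
    by_cases hpε : p.2 ε = 0
    · by_cases hqε : q.2 ε = 0
      · exact Or.inl (Or.inl ⟨⟨hε, hpq ▸ hε⟩, hpε.trans hqε.symm⟩)
      · exact Or.inr hqε
    · exact Or.inl (Or.inr hpε)
  exact (hΛ.1 p hp).2.1 ⟨(hΛ.1 p hp).1, (mk_le_mk_of_subset hcover).trans_lt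
    (mk_union_union_lt (aleph0_le_lift.2 hκ) (hΛ.2 p hp q hq hne).2 hps hqs)⟩

theorem BTWit.injOn_snd_of_large_support (hΛ : BTWit X (smallIdeal κ X) A Λ) :
    InjOn Prod.snd {p ∈ Λ | ¬#(support p.2) < cLift κ} := by
  rintro p ⟨hp, hps⟩ q ⟨hq, -⟩ hpq
  by_contra hne
  refine hps ((mk_le_mk_of_subset fun ε hε => ?_).trans_lt (hΛ.2 p hp q hq hne).2)
  exact ⟨⟨hΛ.support_subset hp hε, hΛ.support_subset hq (hpq ▸ hε)⟩, congrFun hpq ε⟩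

theorem BTWit.twit_supportFiber (hΛ : BTWit X (smallIdeal κ X) A Λ) (u : Set Ordinal.{0}) :
    TWit u (smallIdeal κ u) A (supportFiber Λ u) := by
  constructor
  · rintro f ⟨⟨p, hp, rfl⟩, rfl⟩
    exact ⟨fun ε hε => (hΛ.1 p hp).2.2.1 ε (hΛ.support_subset hp hε),
      fun ε hε => Function.notMem_support.1 hε⟩
  · rintro f ⟨⟨p, hp, rfl⟩, rfl⟩ g ⟨⟨q, hq, rfl⟩, hqu⟩ hne
    refine ⟨sdiff_subset, (mk_le_mk_of_subset ?_).trans_lt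
      (hΛ.2 p hp q hq fun e => hne (e ▸ rfl)).2⟩
    rintro ε ⟨hε, hεD⟩
    have hqε : ε ∈ support q.2 := hqu ▸ hε
    refine ⟨⟨hΛ.support_subset hp hε, hΛ.support_subset hq hqε⟩, ?_⟩
    by_contra h
    exact hεD ⟨hε, hε, hqε, h⟩

theorem BTWit.mk_le_two_power_add_sum (hκ : ℵ₀ ≤ κ) (hX : #X ≤ cLift κ)
    (hΛ : BTWit X (smallIdeal κ X) A Λ) :
    #Λ ≤ 2 ^ #X + sum fun u : largeSubsets κ X =>
      #(supportFiber Λ u) := by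
  set small := {p ∈ Λ | #(support p.2) < cLift κ}
  set large := {p ∈ Λ | ¬#(support p.2) < cLift κ}
  have hsmall : #small ≤ 2 ^ #X := by
    rw [← mk_image_eq_of_injOn _ _ (hΛ.injOn_fst_of_small_support hκ), ← mk_powerset]
    exact mk_le_mk_of_subset (by rintro _ ⟨p, hp, rfl⟩; exact (hΛ.1 p hp.1).1)
  have hlarge : #large ≤ sum fun u : largeSubsets κ X =>
      #(supportFiber Λ u) := by
    rw [← mk_image_eq_of_injOn _ _ hΛ.injOn_snd_of_large_support]
    refine (mk_le_mk_of_subset ?_).trans mk_iUnion_le_sum_mk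
    rintro _ ⟨p, ⟨hp, hps⟩, rfl⟩
    have hsX : support p.2 ⊆ X := (hΛ.support_subset hp).trans (hΛ.1 p hp).1
    exact mem_iUnion.2 ⟨⟨_, hsX, ((mk_le_mk_of_subset hsX).trans hX).antisymm (not_lt.1 hps)⟩,
      ⟨p, hp, rfl⟩, rfl⟩
  calc #Λ ≤ #(small ∪ large : Set _) :=
        mk_le_mk_of_subset fun p hp => (em _).imp (⟨hp, ·⟩) (⟨hp, ·⟩)
    _ ≤ _ := (mk_union_le _ _).trans (add_le_add hsmall hlarge)

end SupportFibers

section Transfer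

variable {κ : Cardinal.{0}} {X : Set Ordinal.{0}} {A : Ordinal.{0} → Set Ordinal.{0}}

theorem nonempty_of_mk_eq_cLift (hκ : κ ≠ 0) (hX : #X = cLift κ) : X.Nonempty :=
  nonempty_coe_sort.1 <| mk_ne_zero_iff.1 <| hX ▸ lift_eq_zero.not.2 hκ

theorem aleph0_le_of_cLift_two_power_le (hκ : ℵ₀ ≤ κ) {c : Cardinal.{1}}
    (hc : cLift (2 ^ κ) ≤ c) : ℵ₀ ≤ c :=
  (aleph0_le_lift.2 (hκ.trans (cantor κ).le)).trans hc

theorem BTWit.exists_twit_sum_min_le (hκ : ℵ₀ ≤ κ) (hX : #X = cLift κ)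
    (h0 : ∀ ε ∈ X, 0 ∉ A ε) (hbig : ∀ ε ∈ X, cLift (2 ^ κ) ≤ #(A ε))
    (hrestr : ∀ u ⊆ X, #u = cLift κ → Tplus u (smallIdeal κ u) A = Tplus X (smallIdeal κ X) A)
    {Λ : Set (Set Ordinal.{0} × (Ordinal.{0} → Ordinal.{0}))}
    (hΛ : BTWit X (smallIdeal κ X) A Λ) (lam : Cardinal.{0}) :
    ∃ H : Set (Ordinal.{0} → Ordinal.{0}), TWit X (smallIdeal κ X) A H ∧
      (sum fun u : largeSubsets κ X =>
        min #(supportFiber Λ u) (cLift lam)) ≤ #H := by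
  have hI : #(largeSubsets κ X) ≤ cLift (2 ^ κ) := by
    calc #(largeSubsets κ X) ≤ #(𝒫 X) := mk_le_mk_of_subset fun u hu => hu.1
      _ = cLift (2 ^ κ) := by rw [mk_powerset, hX, cLift, cLift, lift_power, lift_two]
  -- `Tplus` only sees families through lifted cardinals, so each fiber is cut at `lam`
  have hν (u : largeSubsets κ X) :
      ∃ ν : Cardinal.{0}, cLift ν = min #(supportFiber Λ u) (cLift lam) :=
    mem_range_lift_of_le (min_le_right _ _)
  choose ν hν using hν
  have hfiber (u : largeSubsets κ X) : HasTWit X (smallIdeal κ X) A (ν u) :=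
    HasTWit.of_Tplus_eq (hrestr u.1 u.2.1 u.2.2)
      ⟨_, hΛ.twit_supportFiber u.1, (hν u).trans_le (min_le_left _ _)⟩
  choose G hG hGν using hfiber
  obtain ⟨H, hH, hHsum⟩ := exists_twit_mk_sigma_le
    (nonempty_of_mk_eq_cLift (aleph0_pos.trans_le hκ).ne' hX) (isLowerSet_smallIdeal κ X)
    (empty_mem_smallIdeal (aleph0_pos.trans_le hκ).ne' X) h0
    (fun ε hε => aleph0_le_of_cLift_two_power_le hκ (hbig ε hε))
    (fun ε hε => hI.trans (hbig ε hε)) G hG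
  refine ⟨H, hH, le_trans ?_ ((mk_sigma _).symm.trans_le hHsum)⟩
  exact sum_le_sum _ _ fun u => (hν u).symm.trans_le (hGν u)

theorem HasBTWit.hasTWit_of_two_power_lt (hκ : ℵ₀ ≤ κ) (hX : #X = cLift κ)
    (h0 : ∀ ε ∈ X, 0 ∉ A ε) (hbig : ∀ ε ∈ X, cLift (2 ^ κ) ≤ #(A ε))
    (hrestr : ∀ u ⊆ X, #u = cLift κ → Tplus u (smallIdeal κ u) A = Tplus X (smallIdeal κ X) A)
    {lam : Cardinal.{0}} (hlam : 2 ^ κ < lam) (h : HasBTWit X (smallIdeal κ X) A lam) :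
    HasTWit X (smallIdeal κ X) A lam := by
  obtain ⟨Λ, hΛ, hL⟩ := h
  obtain ⟨H, hH, hHsum⟩ := hΛ.exists_twit_sum_min_le hκ hX h0 hbig hrestr lam
  refine ⟨H, hH, ?_⟩
  by_contra! hHL
  have hmin (u : largeSubsets κ X) :
      min #(supportFiber Λ u) (cLift lam) = #(supportFiber Λ u) := by
    have hlt : min #(supportFiber Λ u) (cLift lam) < cLift lam :=
      ((le_sum.{1, 1} _ u).trans hHsum).trans_lt hHL
    exact min_eq_left ((min_lt_iff.1 hlt).resolve_right (lt_irrefl _)).le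
  have h2X : 2 ^ #X = cLift (2 ^ κ) := by rw [hX, cLift, cLift, lift_power, lift_two]
  have hΛlt : #Λ < cLift lam := calc
    #Λ ≤ 2 ^ #X + sum fun u : largeSubsets κ X => #(supportFiber Λ u) :=
        hΛ.mk_le_two_power_add_sum hκ hX.le
    _ ≤ cLift (2 ^ κ) + #H := add_le_add h2X.le (by simpa only [hmin] using hHsum)
    _ < cLift lam := add_lt_of_lt (aleph0_le_of_cLift_two_power_le hκ (lift_le.2 hlam.le))
      (lift_lt.2 hlam) hHL
  exact hΛlt.not_ge hL

theorem HasBTWit.hasTWit (hκ : ℵ₀ ≤ κ) (hX : #X = cLift κ)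
    (h0 : ∀ ε ∈ X, 0 ∉ A ε) (hbig : ∀ ε ∈ X, cLift (2 ^ κ) ≤ #(A ε))
    (hrestr : ∀ u ⊆ X, #u = cLift κ → Tplus u (smallIdeal κ u) A = Tplus X (smallIdeal κ X) A)
    {lam : Cardinal.{0}} (h : HasBTWit X (smallIdeal κ X) A lam) :
    HasTWit X (smallIdeal κ X) A lam := by
  rcases le_or_gt lam (2 ^ κ) with hle | hlt
  · exact hasTWit_of_lift_le_mk (nonempty_of_mk_eq_cLift (aleph0_pos.trans_le hκ).ne' hX)
      (isLowerSet_smallIdeal κ X) (empty_mem_smallIdeal (aleph0_pos.trans_le hκ).ne' X) h0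
      (fun ε hε => aleph0_le_of_cLift_two_power_le hκ (hbig ε hε))
      (fun ε hε => (lift_le.2 hle).trans (hbig ε hε))
  · exact h.hasTWit_of_two_power_lt hκ hX h0 hbig hrestr hlt

end Transfer

theorem stmt18 (κ : Cardinal) (A : Ordinal → Set Ordinal)
    (hκ : κ.IsRegular)
    (h0 : ∀ ε < κ.ord, (0 : Ordinal) ∉ A ε)
    (hbig : ∀ ε < κ.ord, cLift ((2 : Cardinal) ^ κ) ≤ Cardinal.mk (A ε))
    (hrestr : ∀ u : Set Ordinal, u ⊆ Set.Iio κ.ord → Cardinal.mk u = cLift κ →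
      Tplus u {a | a ⊆ u ∧ Cardinal.mk a < cLift κ} A =
        Tplus (Set.Iio κ.ord) {a | a ⊆ Set.Iio κ.ord ∧ Cardinal.mk a < cLift κ} A) :
    BTplus (Set.Iio κ.ord) {a | a ⊆ Set.Iio κ.ord ∧ Cardinal.mk a < cLift κ} A =
      Tplus (Set.Iio κ.ord) {a | a ⊆ Set.Iio κ.ord ∧ Cardinal.mk a < cLift κ} A := by
  have hX : #(Iio κ.ord) = cLift κ := by rw [mk_Iio_ordinal, card_ord]
  have key (lam : Cardinal.{0}) : HasBTWit (Iio κ.ord) (smallIdeal κ (Iio κ.ord)) A lam ↔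
      HasTWit (Iio κ.ord) (smallIdeal κ (Iio κ.ord)) A lam :=
    ⟨fun h => h.hasTWit hκ.aleph0_le hX h0 hbig hrestr,
      HasTWit.hasBTWit (isLowerSet_smallIdeal κ _) fun hsmall => hsmall.2.ne hX⟩
  change sInf {lam | ¬HasBTWit (Iio κ.ord) (smallIdeal κ (Iio κ.ord)) A lam} =
    sInf {lam | ¬HasTWit (Iio κ.ord) (smallIdeal κ (Iio κ.ord)) A lam}
  simp only [key]

end BB
end
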